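/- η-step noisy power method error bound: with A = UΣU^⊤ + U_⊥Σ_⊥U_⊥^⊤ symmetric PSD and Ũ_η := A^η Û₀ + Σ_{i=1}^η A^{η−i}W_i for noise matrices W_i, if √(1 − dist²(Û₀,U)) > ‖Σ_{i=1}^η Σ^{−i}U^⊤W_i‖, then the Q factor Û of Ũ_η satisfies dist(Û,U) ≤ (R^η dist(Û₀,U) + σ_r^{−η}‖Σ_{i=1}^η Σ_⊥^{η−i}U_⊥^⊤W_i‖) / (√(1 − dist²(Û₀,U)) − ‖Σ_{i=1}^η Σ^{−i}U^⊤W_i‖), where R = σ_{r+1}/σ_r. -/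

import Mathlib

/-!
Write `Ũ = Ũ_η = Û R`. Since `Uᵀ A = Σ Uᵀ`, the top block is `Uᵀ Ũ = Σ^η (Uᵀ Û₀ + E)` with
`E = ∑ Σ^{-i} Uᵀ W_i`, and `σ_min(Uᵀ Û₀) ≥ √(1 - dist²(Û₀, U))`; as `Û` is an isometry,
`σ_min(R) ≥ σ_min(Uᵀ Ũ) ≥ σ_r^η (√(1 - dist²(Û₀, U)) - ‖E‖)`. The bottom block
`U_⊥ᵀ Ũ = Σ_⊥^η U_⊥ᵀ Û₀ + S` has norm at most `σ_{r+1}^η dist(Û₀, U) + ‖S‖`, and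
`dist(Û, U) = ‖U_⊥ᵀ Û‖ = ‖U_⊥ᵀ Ũ R⁻¹‖ ≤ ‖U_⊥ᵀ Ũ‖ / σ_min(R)`.
-/

open Matrix BigOperators

noncomputable def specNorm {m n : Type*} [Fintype m] [Fintype n] [DecidableEq n]
    (A : Matrix m n ℝ) : ℝ :=
  ‖LinearMap.toContinuousLinearMap (Matrix.toEuclideanLin A)‖

noncomputable def distP {n r : ℕ} (Q P : Matrix (Fin n) (Fin r) ℝ) : ℝ :=
  specNorm ((1 - Q * Qᵀ) * P)

def selMat {n : ℕ} (M : Finset (Fin n)) : Matrix (Fin n) {i // i ∈ M} ℝ :=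
  fun i j => if (j : Fin n) = i then 1 else 0

noncomputable def enorm {n : ℕ} (v : Fin n → ℝ) : ℝ :=
  Real.sqrt (∑ i, v i ^ 2)

noncomputable def smin {m n : Type*} [Fintype m] [Fintype n] [DecidableEq m] [DecidableEq n]
    (A : Matrix m n ℝ) : ℝ :=
  Real.sqrt (⨅ i, (Matrix.isHermitian_conjTranspose_mul_self A).eigenvalues i)

noncomputable def lamMax {m : Type*} [Fintype m] [DecidableEq m]
    {A : Matrix m m ℝ} (hA : A.IsHermitian) : ℝ :=
  ⨆ i, hA.eigenvalues i

noncomputable def lamMin {m : Type*} [Fintype m] [DecidableEq m]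
    {A : Matrix m m ℝ} (hA : A.IsHermitian) : ℝ :=
  ⨅ i, hA.eigenvalues i

noncomputable def eigDesc {n : ℕ} {A : Matrix (Fin n) (Fin n) ℝ} (hA : A.IsHermitian)
    (k : ℕ) : ℝ :=
  ((List.ofFn hA.eigenvalues).mergeSort (fun a b => decide (b ≤ a))).getD k 0

open scoped Matrix.Norms.L2Operator RealInnerProductSpace

namespace Matrix

variable {l m n : Type*} [Fintype m] [Fintype n]

theorem specNorm_eq_norm [DecidableEq n] (A : Matrix m n ℝ) : specNorm A = ‖A‖ := rfl

theorem norm_toEuclideanLin_le [DecidableEq n] (A : Matrix m n ℝ) (x : EuclideanSpace ℝ n) :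
    ‖toEuclideanLin A x‖ ≤ ‖A‖ * ‖x‖ :=
  (toEuclideanLin.trans LinearMap.toContinuousLinearMap A).le_opNorm x

theorem norm_le_of_forall [DecidableEq n] {A : Matrix m n ℝ} {c : ℝ} (hc : 0 ≤ c)
    (h : ∀ x, ‖toEuclideanLin A x‖ ≤ c * ‖x‖) : ‖A‖ ≤ c :=
  (toEuclideanLin.trans LinearMap.toContinuousLinearMap A).opNorm_le_bound hc h

theorem toEuclideanLin_mul_apply [DecidableEq m] [DecidableEq n] (A : Matrix l m ℝ)
    (B : Matrix m n ℝ) (x : EuclideanSpace ℝ n) :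
    toEuclideanLin (A * B) x = toEuclideanLin A (toEuclideanLin B x) := by
  simp

theorem inner_toEuclideanLin_transpose [DecidableEq m] [DecidableEq n] (A : Matrix m n ℝ)
    (y : EuclideanSpace ℝ m) (x : EuclideanSpace ℝ n) :
    ⟪toEuclideanLin Aᵀ y, x⟫ = ⟪y, toEuclideanLin A x⟫ := by
  rw [← conjTranspose_eq_transpose_of_trivial, toEuclideanLin_conjTranspose_eq_adjoint,
    LinearMap.adjoint_inner_left]

theorem norm_sq_toEuclideanLin [DecidableEq m] [DecidableEq n] (A : Matrix m n ℝ)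
    (x : EuclideanSpace ℝ n) :
    ‖toEuclideanLin A x‖ ^ 2 = ⟪x, toEuclideanLin (Aᵀ * A) x⟫ := by
  rw [← real_inner_self_eq_norm_sq, toEuclideanLin_mul_apply, ← inner_toEuclideanLin_transpose,
    real_inner_comm]

theorem norm_sq_add_norm_sq_of_gram [Fintype l] [DecidableEq l] [DecidableEq m] [DecidableEq n]
    {A : Matrix m n ℝ} {B : Matrix l n ℝ}
    (h : Aᵀ * A + Bᵀ * B = 1) (x : EuclideanSpace ℝ n) :
    ‖toEuclideanLin A x‖ ^ 2 + ‖toEuclideanLin B x‖ ^ 2 = ‖x‖ ^ 2 := by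
  rw [norm_sq_toEuclideanLin, norm_sq_toEuclideanLin, ← inner_add_right, ← LinearMap.add_apply,
    ← map_add, h, toLpLin_one, LinearMap.id_apply, real_inner_self_eq_norm_sq]

theorem norm_toEuclideanLin_of_transpose_mul_self [DecidableEq m] [DecidableEq n]
    {Q : Matrix m n ℝ} (hQ : Qᵀ * Q = 1)
    (x : EuclideanSpace ℝ n) : ‖toEuclideanLin Q x‖ = ‖x‖ := by
  rw [← sq_eq_sq₀ (norm_nonneg _) (norm_nonneg _), norm_sq_toEuclideanLin, hQ, toLpLin_one,
    LinearMap.id_apply, real_inner_self_eq_norm_sq]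

theorem norm_le_one_of_transpose_mul_self [DecidableEq m] [DecidableEq n] {Q : Matrix m n ℝ}
    (hQ : Qᵀ * Q = 1) : ‖Q‖ ≤ 1 :=
  norm_le_of_forall zero_le_one fun x ↦ by
    rw [norm_toEuclideanLin_of_transpose_mul_self hQ, one_mul]

theorem l2_opNorm_transpose [DecidableEq m] [DecidableEq n] (A : Matrix m n ℝ) : ‖Aᵀ‖ = ‖A‖ := by
  rw [← conjTranspose_eq_transpose_of_trivial, l2_opNorm_conjTranspose]

theorem norm_mul_of_transpose_mul_self [Fintype l] [DecidableEq l] [DecidableEq m] [DecidableEq n]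
    {Q : Matrix m n ℝ} (hQ : Qᵀ * Q = 1) (B : Matrix n l ℝ) : ‖Q * B‖ = ‖B‖ := by
  refine le_antisymm ?_ ?_
  · calc ‖Q * B‖ ≤ ‖Q‖ * ‖B‖ := l2_opNorm_mul Q B
      _ ≤ ‖B‖ := mul_le_of_le_one_left (norm_nonneg _) (norm_le_one_of_transpose_mul_self hQ)
  · calc ‖B‖ = ‖Qᵀ * (Q * B)‖ := by rw [← Matrix.mul_assoc, hQ, Matrix.one_mul]
      _ ≤ ‖Qᵀ‖ * ‖Q * B‖ := l2_opNorm_mul _ _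
      _ ≤ ‖Q * B‖ := by
        rw [l2_opNorm_transpose]
        exact mul_le_of_le_one_left (norm_nonneg _) (norm_le_one_of_transpose_mul_self hQ)

theorem norm_transpose_mul_le_one [Fintype l] [DecidableEq l] [DecidableEq m] [DecidableEq n]
    {U : Matrix l m ℝ} {Q : Matrix l n ℝ} (hU : Uᵀ * U = 1) (hQ : Qᵀ * Q = 1) : ‖Uᵀ * Q‖ ≤ 1 := by
  refine (l2_opNorm_mul _ _).trans (mul_le_one₀ ?_ (norm_nonneg _)
    (norm_le_one_of_transpose_mul_self hQ))
  rw [l2_opNorm_transpose]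
  exact norm_le_one_of_transpose_mul_self hU

/-- `c` bounds the smallest singular value of `A` from below. -/
def IsBoundedBelowBy [DecidableEq n] (A : Matrix m n ℝ) (c : ℝ) : Prop :=
  ∀ x, c * ‖x‖ ≤ ‖toEuclideanLin A x‖

namespace IsBoundedBelowBy

theorem mul [Fintype l] [DecidableEq m] [DecidableEq n]
    {A : Matrix l m ℝ} {B : Matrix m n ℝ} {a b : ℝ}
    (hA : A.IsBoundedBelowBy a) (hB : B.IsBoundedBelowBy b) (ha : 0 ≤ a) :
    (A * B).IsBoundedBelowBy (a * b) := fun x ↦ by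
  rw [toEuclideanLin_mul_apply, mul_assoc]
  exact (mul_le_mul_of_nonneg_left (hB x) ha).trans (hA _)

theorem add [DecidableEq n] {A : Matrix m n ℝ} {c : ℝ} (hA : A.IsBoundedBelowBy c)
    (E : Matrix m n ℝ) : (A + E).IsBoundedBelowBy (c - ‖E‖) := fun x ↦ by
  have := norm_sub_norm_le (toEuclideanLin A x) (-toEuclideanLin E x)
  rw [map_add, LinearMap.add_apply]
  rw [norm_neg, sub_neg_eq_add] at this
  nlinarith [hA x, norm_toEuclideanLin_le E x]

theorem of_mul [Fintype l] [DecidableEq m] [DecidableEq n]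
    {M : Matrix l m ℝ} {R : Matrix m n ℝ} {c : ℝ}
    (h : (M * R).IsBoundedBelowBy c) (hM : ‖M‖ ≤ 1) : R.IsBoundedBelowBy c := fun x ↦ by
  calc c * ‖x‖ ≤ ‖toEuclideanLin (M * R) x‖ := h x
    _ ≤ ‖M‖ * ‖toEuclideanLin R x‖ := by
      rw [toEuclideanLin_mul_apply]; exact norm_toEuclideanLin_le _ _
    _ ≤ ‖toEuclideanLin R x‖ := mul_le_of_le_one_left (norm_nonneg _) hM

theorem surjective [DecidableEq n] {N : Matrix n n ℝ} {c : ℝ} (h : N.IsBoundedBelowBy c)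
    (hc : 0 < c) : Function.Surjective (toEuclideanLin N) := by
  refine LinearMap.injective_iff_surjective.1 <| (injective_iff_map_eq_zero _).2 fun x hx ↦ ?_
  have := h x
  rw [hx, norm_zero] at this
  exact norm_le_zero_iff.1 (nonpos_of_mul_nonpos_right this hc)

theorem norm_le_norm_mul_div [Fintype l] [DecidableEq n] {N : Matrix n n ℝ}
    {c : ℝ} (h : N.IsBoundedBelowBy c) (hc : 0 < c) (X : Matrix l n ℝ) :
    ‖X‖ ≤ ‖X * N‖ / c := by
  refine norm_le_of_forall (by positivity) fun x ↦ ?_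
  obtain ⟨y, rfl⟩ := h.surjective hc x
  rw [← toEuclideanLin_mul_apply, div_mul_eq_mul_div, le_div_iff₀ hc]
  calc ‖toEuclideanLin (X * N) y‖ * c ≤ ‖X * N‖ * ‖y‖ * c := by
        gcongr; exact norm_toEuclideanLin_le _ _
    _ ≤ ‖X * N‖ * ‖toEuclideanLin N y‖ := by
        rw [mul_assoc]; gcongr; rw [mul_comm]; exact h y

/-- If `y = N x` then `‖y‖² = ⟪Nᵀ y, x⟫ ≤ ‖Nᵀ y‖ ‖y‖ / c`. -/
theorem transpose [DecidableEq n] {N : Matrix n n ℝ} {c : ℝ} (h : N.IsBoundedBelowBy c)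
    (hc : 0 ≤ c) : Nᵀ.IsBoundedBelowBy c := by
  rcases hc.eq_or_lt with rfl | hc
  · exact fun y ↦ by simp
  intro y
  obtain ⟨x, rfl⟩ := h.surjective hc y
  set y := toEuclideanLin N x
  have hsq : ‖y‖ ^ 2 ≤ ‖toEuclideanLin Nᵀ y‖ * ‖x‖ := by
    rw [← real_inner_self_eq_norm_sq, ← inner_toEuclideanLin_transpose]
    exact real_inner_le_norm _ _
  have hy : c * ‖y‖ * ‖y‖ ≤ ‖toEuclideanLin Nᵀ y‖ * ‖y‖ := by
    nlinarith [mul_le_mul_of_nonneg_left (h x) (norm_nonneg (toEuclideanLin Nᵀ y))]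
  rcases (norm_nonneg y).eq_or_lt with hy0 | hy0
  · rw [← hy0, mul_zero]; exact norm_nonneg _
  · exact le_of_mul_le_mul_right hy hy0

end IsBoundedBelowBy

theorem isBoundedBelowBy_diagonal [DecidableEq n] {d : n → ℝ} {c : ℝ} (hc : 0 ≤ c)
    (hd : ∀ i, c ≤ |d i|) : (diagonal d).IsBoundedBelowBy c := fun x ↦ by
  rw [← pow_le_pow_iff_left₀ (by positivity) (norm_nonneg _) two_ne_zero, mul_pow,
    EuclideanSpace.norm_sq_eq, EuclideanSpace.norm_sq_eq, Finset.mul_sum]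
  refine Finset.sum_le_sum fun i _ ↦ ?_
  simp only [toLpLin_apply, mulVec_diagonal, Real.norm_eq_abs, abs_mul, mul_pow]
  gcongr
  exact hd i

theorem isBoundedBelowBy_diagonal_pow [DecidableEq n] {d : n → ℝ} {s : ℝ} (hs : 0 ≤ s)
    (hd : ∀ i, s ≤ d i) (k : ℕ) : (diagonal d ^ k).IsBoundedBelowBy (s ^ k) := by
  rw [diagonal_pow]
  refine isBoundedBelowBy_diagonal (pow_nonneg hs k) fun i ↦ ?_
  rw [Pi.pow_apply, abs_of_nonneg (pow_nonneg (hs.trans (hd i)) k)]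
  exact pow_le_pow_left₀ hs (hd i) k

theorem norm_diagonal_pow_mul_le [Fintype l] [DecidableEq l] [DecidableEq n] {d : n → ℝ} {s : ℝ}
    (hd₀ : ∀ i, 0 ≤ d i) (hds : ∀ i, d i ≤ s) (k : ℕ) (B : Matrix n l ℝ) :
    ‖diagonal d ^ k * B‖ ≤ s ^ k * ‖B‖ := by
  -- `s` is only known to be nonnegative when `n` is nonempty
  cases isEmpty_or_nonempty n with
  | inl _ => simp [Subsingleton.elim B 0]
  | inr hn =>
    have hs : 0 ≤ s := (hd₀ hn.some).trans (hds _)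
    calc ‖diagonal d ^ k * B‖ ≤ ‖diagonal d ^ k‖ * ‖B‖ := l2_opNorm_mul _ _
      _ ≤ s ^ k * ‖B‖ := by
        gcongr
        rw [diagonal_pow, l2_opNorm_diagonal]
        refine (pi_norm_le_iff_of_nonneg (by positivity)).2 fun i ↦ ?_
        rw [Pi.pow_apply, norm_pow, Real.norm_of_nonneg (hd₀ i)]
        exact pow_le_pow_left₀ (hd₀ i) (hds i) k

section PowerIteration

variable {α : Type*}

/-- `η` unnormalised power steps from `U₀`, the noise `W i` entering at step `i + 1`. -/
def noisyPowerIterate [DecidableEq n] [Semiring α] {η : ℕ} (A : Matrix n n α) (U₀ : Matrix n l α)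
    (W : Fin η → Matrix n l α) : Matrix n l α :=
  A ^ η * U₀ + ∑ i : Fin η, A ^ (η - 1 - (i : ℕ)) * W i

theorem mul_pow_eq_pow_mul [DecidableEq m] [DecidableEq n] [Semiring α] {B : Matrix m n α}
    {A : Matrix n n α} {D : Matrix m m α} (h : B * A = D * B) (j : ℕ) : B * A ^ j = D ^ j * B := by
  induction j with
  | zero => simp
  | succ j ih =>
    rw [pow_succ, ← Matrix.mul_assoc, ih, Matrix.mul_assoc, h, ← Matrix.mul_assoc, ← pow_succ]

theorem mul_noisyPowerIterate [DecidableEq m] [DecidableEq n] [Semiring α] {η : ℕ}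
    {B : Matrix m n α} {A : Matrix n n α} {D : Matrix m m α} (h : B * A = D * B)
    (U₀ : Matrix n l α) (W : Fin η → Matrix n l α) :
    B * noisyPowerIterate A U₀ W = noisyPowerIterate D (B * U₀) (fun i ↦ B * W i) := by
  simp only [noisyPowerIterate, Matrix.mul_add, Matrix.mul_sum, ← Matrix.mul_assoc,
    mul_pow_eq_pow_mul h]

theorem noisyPowerIterate_eq_pow_mul [DecidableEq n] [CommRing α] {η : ℕ} {D : Matrix n n α}
    (hD : IsUnit D.det) (X : Matrix n l α) (V : Fin η → Matrix n l α) :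
    noisyPowerIterate D X V = D ^ η * (X + ∑ i : Fin η, D⁻¹ ^ ((i : ℕ) + 1) * V i) := by
  have hcomm : Commute D D⁻¹ := (mul_nonsing_inv D hD).trans (nonsing_inv_mul D hD).symm
  have hpow : ∀ j < η, D ^ η * D⁻¹ ^ (j + 1) = D ^ (η - 1 - j) := fun j hj ↦ by
    obtain ⟨d, rfl⟩ := Nat.exists_eq_add_of_lt hj
    rw [show j + d + 1 = d + (j + 1) by ring, pow_add, Matrix.mul_assoc, ← hcomm.mul_pow,
      mul_nonsing_inv D hD, one_pow, Matrix.mul_one, show d + (j + 1) - 1 - j = d by omega]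
  simp only [noisyPowerIterate, Matrix.mul_add, Matrix.mul_sum, ← Matrix.mul_assoc, hpow,
    Fin.is_lt]

theorem transpose_mul_eq_of_decomposition [Fintype l] [DecidableEq m] [CommSemiring α]
    {U : Matrix n m α} {V : Matrix n l α} {A : Matrix n n α} {D : Matrix m m α} {E : Matrix l l α}
    (hA : A = U * D * Uᵀ + V * E * Vᵀ) (hU : Uᵀ * U = 1) (hUV : Uᵀ * V = 0) :
    Uᵀ * A = D * Uᵀ := by
  simp only [hA, Matrix.mul_add, ← Matrix.mul_assoc, hU, hUV, Matrix.one_mul, Matrix.zero_mul,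
    add_zero]

end PowerIteration

end Matrix

section PrincipalAngles

variable {n r : ℕ} {Q U : Matrix (Fin n) (Fin r) ℝ}

theorem norm_sq_add_norm_sq_distP (hQ : Qᵀ * Q = 1) (hU : Uᵀ * U = 1)
    (x : EuclideanSpace ℝ (Fin r)) :
    ‖toEuclideanLin ((1 - Q * Qᵀ) * U) x‖ ^ 2 + ‖toEuclideanLin (Qᵀ * U) x‖ ^ 2 = ‖x‖ ^ 2 := by
  refine norm_sq_add_norm_sq_of_gram ?_ x
  have hQQ : ∀ X : Matrix (Fin r) (Fin r) ℝ, Qᵀ * (Q * X) = X := fun X ↦ by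
    rw [← Matrix.mul_assoc, hQ, Matrix.one_mul]
  simp only [transpose_mul, transpose_sub, transpose_transpose, Matrix.sub_mul,
    Matrix.mul_sub, Matrix.one_mul, Matrix.mul_assoc, hQQ, hU]
  abel

theorem isBoundedBelowBy_sqrt_one_sub_distP_sq (hQ : Qᵀ * Q = 1) (hU : Uᵀ * U = 1) :
    (Qᵀ * U).IsBoundedBelowBy √(1 - distP Q U ^ 2) := fun x ↦ by
  have hP := norm_sq_add_norm_sq_distP hQ hU x
  have hd : ‖toEuclideanLin ((1 - Q * Qᵀ) * U) x‖ ≤ distP Q U * ‖x‖ := norm_toEuclideanLin_le _ _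
  have hd2 := pow_le_pow_left₀ (norm_nonneg _) hd 2
  rw [← pow_le_pow_iff_left₀ (by positivity) (norm_nonneg _) two_ne_zero, mul_pow, Real.sq_sqrt',
    max_mul_of_nonneg _ _ (by positivity), zero_mul]
  rw [mul_pow] at hd2
  exact max_le (by linarith) (by positivity)

theorem distP_le_of_isBoundedBelowBy (hQ : Qᵀ * Q = 1) (hU : Uᵀ * U = 1) {t : ℝ} (ht : 0 ≤ t)
    (h : (Qᵀ * U).IsBoundedBelowBy √(1 - t ^ 2)) : distP Q U ≤ t := by
  refine norm_le_of_forall ht fun x ↦ ?_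
  have hP := norm_sq_add_norm_sq_distP hQ hU x
  have hx := h x
  rw [← pow_le_pow_iff_left₀ (by positivity) (norm_nonneg _) two_ne_zero, mul_pow,
    Real.sq_sqrt'] at hx
  have := mul_le_mul_of_nonneg_right (le_max_left (1 - t ^ 2) 0) (sq_nonneg ‖x‖)
  rw [← pow_le_pow_iff_left₀ (norm_nonneg _) (by positivity) two_ne_zero, mul_pow]
  linarith

/-- Both sides are `√(1 - σ_min(QᵀU)²)`, and the square matrix `QᵀU` and its transpose have the
same smallest singular value. -/
theorem distP_comm (hQ : Qᵀ * Q = 1) (hU : Uᵀ * U = 1) : distP Q U = distP U Q := by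
  have key : ∀ {Q U : Matrix (Fin n) (Fin r) ℝ}, Qᵀ * Q = 1 → Uᵀ * U = 1 → distP Q U ≤ distP U Q :=
    fun hQ hU ↦ distP_le_of_isBoundedBelowBy hQ hU (norm_nonneg _) <| by
      simpa using (isBoundedBelowBy_sqrt_one_sub_distP_sq hU hQ).transpose (Real.sqrt_nonneg _)
  exact le_antisymm (key hQ hU) (key hU hQ)

theorem distP_eq_norm_transpose_mul {k : ℕ} {V : Matrix (Fin n) (Fin k) ℝ} (hQ : Qᵀ * Q = 1)
    (hU : Uᵀ * U = 1) (hV : Vᵀ * V = 1) (hUV : U * Uᵀ + V * Vᵀ = 1) :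
    distP Q U = ‖Vᵀ * Q‖ := by
  rw [distP_comm hQ hU, distP, specNorm_eq_norm, ← eq_sub_of_add_eq' hUV, Matrix.mul_assoc,
    norm_mul_of_transpose_mul_self hV]

theorem distP_le_div_of_eq_mul {k : ℕ} {V : Matrix (Fin n) (Fin k) ℝ}
    {X : Matrix (Fin n) (Fin r) ℝ} {R : Matrix (Fin r) (Fin r) ℝ} {b : ℝ} (hQ : Qᵀ * Q = 1)
    (hU : Uᵀ * U = 1) (hV : Vᵀ * V = 1) (hUV : U * Uᵀ + V * Vᵀ = 1) (hX : X = Q * R)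
    (hb : (Uᵀ * X).IsBoundedBelowBy b) (hb₀ : 0 < b) : distP Q U ≤ ‖Vᵀ * X‖ / b := by
  subst hX
  rw [← Matrix.mul_assoc] at hb
  rw [distP_eq_norm_transpose_mul hQ hU hV hUV, ← Matrix.mul_assoc]
  exact (hb.of_mul (norm_transpose_mul_le_one hU hQ)).norm_le_norm_mul_div hb₀ _

end PrincipalAngles

theorem noisy_PM_eta_steps
    {n r η : ℕ} (A : Matrix (Fin n) (Fin n) ℝ)
    (U Uhat0 Uhat : Matrix (Fin n) (Fin r) ℝ)
    (W : Fin η → Matrix (Fin n) (Fin r) ℝ)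
    (Uperp : Matrix (Fin n) (Fin (n - r)) ℝ)
    (Rm : Matrix (Fin r) (Fin r) ℝ)
    (σ : Fin r → ℝ) (σp : Fin (n - r) → ℝ) (σr σr1 : ℝ)
    (hU : Uᵀ * U = 1) (hUp : Uperpᵀ * Uperp = 1)
    (hU0 : Uhat0ᵀ * Uhat0 = 1) (hUhat : Uhatᵀ * Uhat = 1)
    (horth : Uᵀ * Uperp = 0)
    (hcomp : U * Uᵀ + Uperp * Uperpᵀ = 1)
    (hA : A = U * Matrix.diagonal σ * Uᵀ + Uperp * Matrix.diagonal σp * Uperpᵀ)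
    (hσr : ∀ i, σr ≤ σ i) (hσrpos : 0 < σr)
    (hσpnn : ∀ i, 0 ≤ σp i) (hσr1 : ∀ i, σp i ≤ σr1)
    (hQR : A ^ η * Uhat0 + ∑ i : Fin η, A ^ (η - 1 - (i : ℕ)) * W i = Uhat * Rm)
    (hdenom :
      specNorm (∑ i : Fin η, ((Matrix.diagonal σ)⁻¹) ^ ((i : ℕ) + 1) * (Uᵀ * W i)) <
        Real.sqrt (1 - (distP Uhat0 U) ^ 2)) :
    distP Uhat U ≤
      ((σr1 / σr) ^ η * distP Uhat0 U +
          (σr⁻¹) ^ η *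
            specNorm (∑ i : Fin η,
              (Matrix.diagonal σp) ^ (η - 1 - (i : ℕ)) * (Uperpᵀ * W i))) /
        (Real.sqrt (1 - (distP Uhat0 U) ^ 2) -
          specNorm (∑ i : Fin η, ((Matrix.diagonal σ)⁻¹) ^ ((i : ℕ) + 1) * (Uᵀ * W i))) := by
  have hQR' : noisyPowerIterate A Uhat0 W = Uhat * Rm := hQR
  set d₀ := distP Uhat0 U
  set E := ∑ i : Fin η, (diagonal σ)⁻¹ ^ ((i : ℕ) + 1) * (Uᵀ * W i)
  set S := ∑ i : Fin η, diagonal σp ^ (η - 1 - (i : ℕ)) * (Uperpᵀ * W i)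
  simp only [specNorm_eq_norm] at hdenom ⊢
  have hUA : Uᵀ * A = diagonal σ * Uᵀ := transpose_mul_eq_of_decomposition hA hU horth
  have hUperpA : Uperpᵀ * A = diagonal σp * Uperpᵀ :=
    transpose_mul_eq_of_decomposition (hA.trans (add_comm _ _)) hUp
      (by simpa using congrArg transpose horth)
  have hσunit : IsUnit (diagonal σ).det := by
    rw [det_diagonal]
    exact (Finset.prod_ne_zero_iff.2 fun i _ ↦ (hσrpos.trans_le (hσr i)).ne').isUnit
  have hcos : (Uᵀ * Uhat0).IsBoundedBelowBy √(1 - d₀ ^ 2) := by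
    rw [show d₀ = distP U Uhat0 from distP_comm hU0 hU]
    exact isBoundedBelowBy_sqrt_one_sub_distP_sq hU hU0
  have hlow : (Uᵀ * noisyPowerIterate A Uhat0 W).IsBoundedBelowBy
      (σr ^ η * (√(1 - d₀ ^ 2) - ‖E‖)) := by
    rw [mul_noisyPowerIterate hUA, noisyPowerIterate_eq_pow_mul hσunit]
    exact (isBoundedBelowBy_diagonal_pow hσrpos.le hσr η).mul (hcos.add E) (by positivity)
  have hup : ‖Uperpᵀ * noisyPowerIterate A Uhat0 W‖ ≤ σr1 ^ η * d₀ + ‖S‖ := by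
    rw [mul_noisyPowerIterate hUperpA,
      show d₀ = ‖Uperpᵀ * Uhat0‖ from distP_eq_norm_transpose_mul hU0 hU hUp hcomp]
    exact (norm_add_le _ _).trans (add_le_add_left (norm_diagonal_pow_mul_le hσpnn hσr1 η _) _)
  have hgap : 0 < σr ^ η * (√(1 - d₀ ^ 2) - ‖E‖) := mul_pos (pow_pos hσrpos η) (sub_pos.2 hdenom)
  calc distP Uhat U ≤ ‖Uperpᵀ * noisyPowerIterate A Uhat0 W‖ / (σr ^ η * (√(1 - d₀ ^ 2) - ‖E‖)) :=
        distP_le_div_of_eq_mul hUhat hU hUp hcomp hQR' hlow hgap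
    _ ≤ (σr1 ^ η * d₀ + ‖S‖) / (σr ^ η * (√(1 - d₀ ^ 2) - ‖E‖)) := by gcongr
    _ = _ := by
      rw [div_pow, inv_pow]
      field_simp
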